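/- For every partition P of Fin n (n ≥ 1), among the complements of P the Hamming distance HD(P,·) and the variation of information VI(P,·) have the same minimizers and the same maximizers: a complement Q of P minimizes HD(P,Q) over all complements of P if and only if it minimizes VI(P,Q) over all complements of P, and likewise a complement Q maximizes HD(P,Q) over complements of P if and only if it maximizes VI(P,Q) over complements of P. -/

import Mathlib

open scoped BigOperators

/-- The size `s(P)` of a partition `P` of `Fin n`: the number of unordered pairs
`{i,j}` of distinct elements of `Fin n` that are `P`-equivalent (counted as
ordered pairs `(i,j)` with `i < j`). -/
noncomputable def partSize (n : ℕ) (P : Setoid (Fin n)) : ℕ :=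
  Set.ncard {p : Fin n × Fin n | p.1 < p.2 ∧ P p.1 p.2}

/-- Hamming distance between partitions: `HD(P,Q) = s(P) + s(Q) - 2 s(P ⊓ Q)`. -/
noncomputable def HD (n : ℕ) (P Q : Setoid (Fin n)) : ℤ :=
  (partSize n P : ℤ) + (partSize n Q : ℤ) - 2 * (partSize n (P ⊓ Q) : ℤ)

/-- Entropy of a partition (binary logarithm):
`e(P) = -∑_{A block of P} (|A|/n) · log₂(|A|/n)`. -/
noncomputable def entropy (n : ℕ) (P : Setoid (Fin n)) : ℝ :=
  - ∑ᶠ A ∈ P.classes, ((A.ncard : ℝ) / n) * Real.logb 2 ((A.ncard : ℝ) / n)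

/-- Variation of information: `VI(P,Q) = 2 e(P ⊓ Q) - e(P) - e(Q)`. -/
noncomputable def VI (n : ℕ) (P Q : Setoid (Fin n)) : ℝ :=
  2 * entropy n (P ⊓ Q) - entropy n P - entropy n Q

/-!
For a complement `Q` of `P` the meet `P ⊓ Q` is discrete, so up to terms depending on `P` only,
`HD(P,Q)` is `∑_B C(|B|,2)` and `VI(P,Q)` is a positive multiple of `∑_B |B| log |B|`, the sums
running over the blocks `B` of `Q`. Both have the form `∑_B g(|B|)` with `g 0 = 0` and strictly
increasing increments, and every such sum is a strictly decreasing function of the profile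
`m ↦ ∑_B min(|B|, m)` of `Q` (a discrete Karamata inequality, obtained by expanding `g` in the hinge
functions `c ↦ (c - m)⁺`). So it suffices that, among the complements of `P`, the profiles have a
greatest and a least element: then both `HD(P,·)` and `VI(P,·)` are minimized exactly by the
complements with the greatest profile and maximized exactly by those with the least one.

The profile of a complement `Q` is at most `min((n + 1 - #P) m, n)` because `#P + #Q ≤ n + 1`, a
dimension count for the functions constant on blocks; dealing the elements, column by column, into
`n + 1 - #P` blocks attains this bound. The profile of `Q` is at least the size of the union of the
`m` largest blocks of `P`, since every block of `Q` meets each block of `P` at most once; grouping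
the elements by their rank inside their `P`-block attains this bound.
-/

open Finset
open scoped Classical

lemma eq_add_sum_mul_tsub (g : ℕ → ℝ) {c M : ℕ} (hc : c ≤ M + 1) :
    g c = g 0 + c * (g 1 - g 0) + ∑ i ∈ range M,
      ((g (i + 2) - g (i + 1)) - (g (i + 1) - g i)) * ((c - (i + 1) : ℕ) : ℝ) := by
  induction c with
  | zero => simp
  | succ c ih =>
    set δ : ℕ → ℝ := fun i => (g (i + 2) - g (i + 1)) - (g (i + 1) - g i)
    have hstep : ∀ i ∈ range M, δ i * ((c + 1 - (i + 1) : ℕ) : ℝ) =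
        δ i * ((c - (i + 1) : ℕ) : ℝ) + if i < c then δ i else 0 := by
      intro i _
      split_ifs with h
      · rw [show c + 1 - (i + 1) = c - (i + 1) + 1 by omega]; push_cast; ring
      · rw [show c + 1 - (i + 1) = 0 by omega, show c - (i + 1) = 0 by omega]; simp
    have hrange : (range M).filter (· < c) = range c := by
      ext i; simp only [mem_filter, mem_range]; omega
    have htel : ∑ i ∈ range c, δ i = (g (c + 1) - g c) - (g 1 - g 0) :=
      sum_range_sub (fun i => g (i + 1) - g i) c
    rw [sum_congr rfl hstep, sum_add_distrib, ← sum_filter, hrange, htel, ih (by omega)]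
    push_cast; ring

lemma strictMono_sub_of_strictConvexOn {f : ℝ → ℝ} (hf : StrictConvexOn ℝ (Set.Ici 0) f) :
    StrictMono fun i : ℕ => f (i + 1 : ℕ) - f i := by
  refine strictMono_nat_of_lt_succ fun i => ?_
  have h := hf.2 (Set.mem_Ici.2 (Nat.cast_nonneg i)) (Set.mem_Ici.2 (Nat.cast_nonneg (i + 2)))
    (by simp) (by norm_num : (0 : ℝ) < 1 / 2) (by norm_num : (0 : ℝ) < 1 / 2) (by norm_num)
  rw [smul_eq_mul, smul_eq_mul, smul_eq_mul, smul_eq_mul] at h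
  push_cast at h ⊢
  rw [show 1 / 2 * (i : ℝ) + 1 / 2 * (i + 2) = i + 1 by ring] at h
  rw [show (i : ℝ) + 1 + 1 = i + 2 by ring]
  linarith

lemma strictMono_choose_two_sub : StrictMono fun i : ℕ => ((i + 1).choose 2 : ℝ) - i.choose 2 := by
  simp only [Nat.choose_succ_succ', Nat.choose_one_right, Nat.cast_add, add_sub_cancel_right]
  exact Nat.strictMono_cast

lemma Set.ncard_eq_card_filter_mem {α : Type*} [Fintype α] (B : Set α) :
    B.ncard = #{x | x ∈ B} := by
  rw [← Set.ncard_coe_finset]; congr; ext; simp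

section CountSmaller

variable {ι β : Type*} [LinearOrder β] {s : Finset ι} {f : ι → β} {x y : ι}

lemma card_filter_lt_lt_card_filter_lt (hx : x ∈ s) (h : f x < f y) :
    #{z ∈ s | f z < f x} < #{z ∈ s | f z < f y} :=
  card_lt_card <| (ssubset_iff_of_subset fun z hz => by
    simp only [mem_filter] at hz ⊢; exact ⟨hz.1, hz.2.trans h⟩).2
    ⟨x, by simp [hx, h], by simp⟩

lemma card_filter_lt_lt_card (hx : x ∈ s) : #{z ∈ s | f z < f x} < #s :=
  card_lt_card <| (ssubset_iff_of_subset (filter_subset _ _)).2 ⟨x, hx, by simp⟩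

lemma image_card_filter_lt (hf : Set.InjOn f s) :
    s.image (fun x => #{z ∈ s | f z < f x}) = range #s := by
  refine eq_of_subset_of_card_le (fun p hp => ?_) ?_
  · obtain ⟨x, hx, rfl⟩ := mem_image.1 hp
    exact mem_range.2 (card_filter_lt_lt_card hx)
  · rw [card_range, card_image_of_injOn]
    intro x hx y hy hxy
    by_contra hne
    rcases lt_or_gt_of_ne (hf.ne hx hy hne) with h | h
    · exact (card_filter_lt_lt_card_filter_lt hx h).ne hxy
    · exact (card_filter_lt_lt_card_filter_lt hy h).ne' hxy

end CountSmaller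

lemma Finset.exists_subset_card_eq_min_forall_le {ι β : Type*} [LinearOrder β] (s : Finset ι)
    (w : ι → β) (m : ℕ) :
    ∃ I ⊆ s, #I = min m #s ∧ ∀ x ∈ I, ∀ y ∈ s, y ∉ I → w y ≤ w x := by
  induction m with
  | zero => exact ⟨∅, empty_subset _, by simp, by simp⟩
  | succ m ih =>
    obtain ⟨I, hIs, hIcard, hItop⟩ := ih
    by_cases hfull : s \ I = ∅
    · refine ⟨I, hIs, ?_, hItop⟩
      have : #s ≤ #I := card_le_card (sdiff_eq_empty_iff_subset.1 hfull)
      omega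
    obtain ⟨y, hy, hymax⟩ := exists_max_image (s \ I) w (nonempty_iff_ne_empty.2 hfull)
    rw [mem_sdiff] at hy
    refine ⟨insert y I, insert_subset hy.1 hIs, ?_, fun x hx z hz hzI => ?_⟩
    · have : #I < #s := card_lt_card ⟨hIs, fun h => hy.2 (h hy.1)⟩
      rw [card_insert_of_notMem hy.2]
      omega
    · rw [mem_insert, not_or] at hzI
      rcases mem_insert.1 hx with rfl | hx
      · exact hymax z (mem_sdiff.2 ⟨hz, hzI.2⟩)
      · exact hItop x hx z hz hzI.2

lemma Finset.exists_subset_forall_min_card_filter_le {ι β : Type*} [LinearOrder β]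
    (s : Finset ι) (w : ι → β) (m : ℕ) :
    ∃ I ⊆ s, #I ≤ m ∧ ∀ b, min #{x ∈ s | b < w x} m ≤ #{x ∈ I | b < w x} := by
  obtain ⟨I, hIs, hIcard, hItop⟩ := s.exists_subset_card_eq_min_forall_le w m
  refine ⟨I, hIs, hIcard ▸ min_le_left _ _, fun b => ?_⟩
  by_cases hout : ∃ y ∈ s, y ∉ I ∧ b < w y
  · obtain ⟨y, hys, hyI, hy⟩ := hout
    rw [filter_true_of_mem fun x hx => hy.trans_le (hItop x hx y hys hyI), hIcard]
    exact le_min (min_le_right _ _) ((min_le_left _ _).trans (card_le_card (filter_subset _ _)))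
  · simp only [not_exists, not_and, not_lt] at hout
    refine (min_le_left _ _).trans (card_le_card fun x hx => ?_)
    rw [mem_filter] at hx ⊢
    by_contra hxI
    exact (hout x hx.1 (fun h => hxI ⟨h, hx.2⟩)).not_gt hx.2

lemma forall_isCompl_le_iff_isMinOn_and_isMaxOn {L γ δ : Type*} [Lattice L] [BoundedOrder L]
    [Preorder γ] [Preorder δ] {P Q : L} {f : L → γ} {h : L → δ}
    (hfh : ∀ Q₁ Q₂, IsCompl P Q₁ → IsCompl P Q₂ → (f Q₁ ≤ f Q₂ ↔ h Q₁ ≤ h Q₂))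
    (hQ : IsCompl P Q) :
    ((∀ Q', P ⊓ Q' = ⊥ → P ⊔ Q' = ⊤ → f Q ≤ f Q') ↔ IsMinOn h {Q' | IsCompl P Q'} Q) ∧
      ((∀ Q', P ⊓ Q' = ⊥ → P ⊔ Q' = ⊤ → f Q' ≤ f Q) ↔ IsMaxOn h {Q' | IsCompl P Q'} Q) := by
  simp only [isMinOn_iff, isMaxOn_iff, Set.mem_ofPred_eq, isCompl_iff, disjoint_iff,
    codisjoint_iff, and_imp]
  exact ⟨forall₃_congr fun _ h₁ h₂ => hfh _ _ hQ (.of_eq h₁ h₂),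
    forall₃_congr fun _ h₁ h₂ => hfh _ _ (.of_eq h₁ h₂) hQ⟩

namespace Setoid

variable {α : Type*}

lemma rel_iff_rel_of_rel {P : Setoid α} {x y : α} (h : P x y) (z : α) : P z x ↔ P z y :=
  ⟨fun hz => P.trans hz h, fun hz => P.trans hz (P.symm h)⟩

lemma setOf_rel_eq_setOf_rel_iff {P : Setoid α} {x y : α} :
    {z | P z x} = {z | P z y} ↔ P x y :=
  ⟨fun h => (h ▸ P.refl x : x ∈ {z | P z y}), fun h => Set.ext (rel_iff_rel_of_rel h)⟩

section Blocks

variable [Fintype α]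

noncomputable def classesFinset (S : Setoid α) : Finset (Set α) :=
  S.classes.toFinite.toFinset

@[simp]
lemma mem_classesFinset {S : Setoid α} {B : Set α} : B ∈ S.classesFinset ↔ B ∈ S.classes :=
  Set.Finite.mem_toFinset _

lemma class_mem_classesFinset (S : Setoid α) (x : α) : {y | S y x} ∈ S.classesFinset :=
  mem_classesFinset.2 (S.mem_classes x)

lemma filter_rel_eq_of_rel {P : Setoid α} {x y : α} (h : P x y) :
    ({z | P z x} : Finset α) = ({z | P z y} : Finset α) :=
  filter_congr fun z _ => rel_iff_rel_of_rel h z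

noncomputable def classSize (P : Setoid α) (x : α) : ℕ := #{y | P y x}

lemma classSize_eq_of_rel {P : Setoid α} {x y : α} (h : P x y) : P.classSize x = P.classSize y := by
  rw [classSize, classSize, filter_rel_eq_of_rel h]

lemma card_eq_sum_card_filter_mem_classes (S : Setoid α) (T : Finset α) :
    #T = ∑ B ∈ S.classesFinset, #{x ∈ T | x ∈ B} := by
  rw [card_eq_sum_card_fiberwise fun x _ => S.class_mem_classesFinset x]
  refine sum_congr rfl fun B hB => congrArg card (filter_congr fun x _ => ?_)
  obtain ⟨z, rfl⟩ := mem_classesFinset.1 hB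
  exact setOf_rel_eq_setOf_rel_iff

lemma sum_ncard_classesFinset (S : Setoid α) :
    ∑ B ∈ S.classesFinset, B.ncard = Fintype.card α := by
  simp only [Set.ncard_eq_card_filter_mem, ← card_univ]
  exact (S.card_eq_sum_card_filter_mem_classes univ).symm

lemma ncard_pos_of_mem_classesFinset {S : Setoid α} {B : Set α}
    (hB : B ∈ S.classesFinset) : 0 < B.ncard := by
  obtain ⟨x, rfl⟩ := mem_classesFinset.1 hB
  exact (Set.ncard_pos).2 ⟨x, S.refl x⟩

lemma card_classesFinset_le (S : Setoid α) : #S.classesFinset ≤ Fintype.card α := by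
  rw [← S.sum_ncard_classesFinset, card_eq_sum_ones]
  exact sum_le_sum fun B hB => ncard_pos_of_mem_classesFinset hB

/-- The pointwise order on profiles is the majorization order on block sizes, reversed:
`S.profile m` is the largest number of points that can be chosen with at most `m` in each block. -/
noncomputable def profile (S : Setoid α) (m : ℕ) : ℕ :=
  ∑ B ∈ S.classesFinset, min B.ncard m

lemma card_le_profile {S : Setoid α} {T : Finset α} {m : ℕ}
    (h : ∀ B ∈ S.classesFinset, #{x ∈ T | x ∈ B} ≤ m) : #T ≤ S.profile m := by
  rw [S.card_eq_sum_card_filter_mem_classes T]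
  refine sum_le_sum fun B hB => le_min ?_ (h B hB)
  rw [Set.ncard_eq_card_filter_mem]
  exact card_le_card fun x hx => by simp_all

lemma profile_le_card {S : Setoid α} {T : Finset α} {m : ℕ}
    (h : ∀ B ∈ S.classesFinset, min B.ncard m ≤ #{x ∈ T | x ∈ B}) : S.profile m ≤ #T := by
  rw [S.card_eq_sum_card_filter_mem_classes T]
  exact sum_le_sum h

lemma profile_le_card_mul (S : Setoid α) (m : ℕ) : S.profile m ≤ #S.classesFinset * m := by
  rw [← smul_eq_mul, ← sum_const]
  exact sum_le_sum fun _ _ => min_le_right _ _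

lemma profile_le_card_univ (S : Setoid α) (m : ℕ) : S.profile m ≤ Fintype.card α :=
  S.sum_ncard_classesFinset ▸ sum_le_sum fun _ _ => min_le_left _ _

end Blocks

section Majorization

variable [Fintype α]

noncomputable def classSum (S : Setoid α) (g : ℕ → ℝ) : ℝ :=
  ∑ B ∈ S.classesFinset, g B.ncard

lemma classSum_eq_sum_profile (S : Setoid α) {g : ℕ → ℝ} (hg0 : g 0 = 0) :
    S.classSum g = Fintype.card α * g 1 + ∑ i ∈ range (Fintype.card α),
      ((g (i + 2) - g (i + 1)) - (g (i + 1) - g i)) *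
        ((Fintype.card α : ℝ) - S.profile (i + 1)) := by
  have hsize : ∀ B ∈ S.classesFinset, B.ncard ≤ Fintype.card α + 1 := fun B _ =>
    (Set.ncard_le_card B).trans (by simp)
  have hexcess : ∀ m, ∑ B ∈ S.classesFinset, ((B.ncard - m : ℕ) : ℝ) =
      Fintype.card α - S.profile m := by
    intro m
    rw [eq_sub_iff_add_eq, profile, ← S.sum_ncard_classesFinset, ← Nat.cast_sum, ← Nat.cast_add,
      ← sum_add_distrib]
    exact congrArg _ (sum_congr rfl fun B _ => Nat.sub_add_min_cancel _ _)
  rw [classSum, sum_congr rfl fun B hB => eq_add_sum_mul_tsub g (hsize B hB), sum_add_distrib,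
    sum_comm]
  simp only [hg0, zero_add, sub_zero, ← sum_mul, ← mul_sum, hexcess, ← Nat.cast_sum,
    S.sum_ncard_classesFinset]

@[simp]
lemma profile_zero (S : Setoid α) : S.profile 0 = 0 := by
  simp [profile]

lemma profile_of_card_le (S : Setoid α) {m : ℕ} (hm : Fintype.card α ≤ m) :
    S.profile m = Fintype.card α := by
  rw [profile, ← S.sum_ncard_classesFinset]
  exact sum_congr rfl fun B _ => min_eq_left ((Set.ncard_le_card B).trans (by simpa using hm))

variable {g : ℕ → ℝ} {S S' : Setoid α}

lemma classSum_sub_classSum (hg0 : g 0 = 0) : S.classSum g - S'.classSum g =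
    ∑ i ∈ range (Fintype.card α), ((g (i + 2) - g (i + 1)) - (g (i + 1) - g i)) *
      ((S'.profile (i + 1) : ℝ) - S.profile (i + 1)) := by
  rw [classSum_eq_sum_profile S hg0, classSum_eq_sum_profile S' hg0, add_sub_add_left_eq_sub,
    ← sum_sub_distrib]
  exact sum_congr rfl fun i _ => by ring

lemma classSum_le_classSum_of_profile_le (hg0 : g 0 = 0) (hg : Monotone fun i => g (i + 1) - g i)
    (h : ∀ m, S.profile m ≤ S'.profile m) : S'.classSum g ≤ S.classSum g := by
  rw [← sub_nonneg, classSum_sub_classSum hg0]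
  exact sum_nonneg fun i _ => mul_nonneg (sub_nonneg.2 (hg (Nat.le_succ i)))
    (sub_nonneg.2 (Nat.cast_le.2 (h _)))

lemma profile_eq_of_classSum_eq (hg0 : g 0 = 0) (hg : StrictMono fun i => g (i + 1) - g i)
    (h : ∀ m, S.profile m ≤ S'.profile m) (heq : S.classSum g = S'.classSum g) :
    S.profile = S'.profile := by
  have hterms := (sum_eq_zero_iff_of_nonneg fun i _ => mul_nonneg
    (sub_nonneg.2 (hg.monotone (Nat.le_succ i))) (sub_nonneg.2 (Nat.cast_le.2 (h _)))).1
    ((classSum_sub_classSum hg0).symm.trans (sub_eq_zero.2 heq))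
  funext m
  rcases Nat.eq_zero_or_pos m with rfl | hm
  · simp
  rcases le_or_gt (Fintype.card α) m with hN | hN
  · rw [S.profile_of_card_le hN, S'.profile_of_card_le hN]
  obtain ⟨i, rfl⟩ := Nat.exists_eq_add_of_le' hm
  have hi := hterms i (mem_range.2 (by omega))
  rw [mul_eq_zero, sub_eq_zero, sub_eq_zero, Nat.cast_inj] at hi
  exact hi.resolve_left (hg (Nat.lt_succ_self i)).ne' |>.symm

lemma classSum_eq_of_profile_eq (hg0 : g 0 = 0) (h : S.profile = S'.profile) :
    S.classSum g = S'.classSum g := by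
  rw [classSum_eq_sum_profile S hg0, classSum_eq_sum_profile S' hg0, h]

variable {C : Set (Setoid α)} {Q Q₀ Q₁ : Setoid α}

theorem isMinOn_classSum_iff (hg0 : g 0 = 0) (hg : StrictMono fun i => g (i + 1) - g i)
    (hQ : Q ∈ C) (hQ₁ : Q₁ ∈ C) (hmax : ∀ Q' ∈ C, ∀ m, Q'.profile m ≤ Q₁.profile m) :
    IsMinOn (classSum · g) C Q ↔ Q.profile = Q₁.profile := by
  refine ⟨fun hmin => profile_eq_of_classSum_eq hg0 hg (hmax Q hQ) ?_, fun h => ?_⟩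
  · exact le_antisymm (hmin hQ₁) (classSum_le_classSum_of_profile_le hg0 hg.monotone (hmax Q hQ))
  · intro Q' hQ'
    show Q.classSum g ≤ Q'.classSum g
    rw [classSum_eq_of_profile_eq hg0 h]
    exact classSum_le_classSum_of_profile_le hg0 hg.monotone (hmax Q' hQ')

theorem isMaxOn_classSum_iff (hg0 : g 0 = 0) (hg : StrictMono fun i => g (i + 1) - g i)
    (hQ : Q ∈ C) (hQ₀ : Q₀ ∈ C) (hmin : ∀ Q' ∈ C, ∀ m, Q₀.profile m ≤ Q'.profile m) :
    IsMaxOn (classSum · g) C Q ↔ Q.profile = Q₀.profile := by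
  refine ⟨fun hmax => (profile_eq_of_classSum_eq hg0 hg (hmin Q hQ) ?_).symm, fun h => ?_⟩
  · exact le_antisymm (hmax hQ₀) (classSum_le_classSum_of_profile_le hg0 hg.monotone (hmin Q hQ))
  · intro Q' hQ'
    show Q'.classSum g ≤ Q.classSum g
    rw [classSum_eq_of_profile_eq hg0 h]
    exact classSum_le_classSum_of_profile_le hg0 hg.monotone (hmin Q' hQ')

end Majorization

section BlockCount

noncomputable def classFunctions (S : Setoid α) : Submodule ℚ (α → ℚ) :=
  LinearMap.range (LinearMap.funLeft ℚ ℚ (Quotient.mk S))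

lemma mem_classFunctions {S : Setoid α} {f : α → ℚ} : f ∈ S.classFunctions ↔ S ≤ ker f := by
  refine ⟨?_, fun h => ⟨Quotient.lift f fun _ _ hxy => h hxy, rfl⟩⟩
  rintro ⟨f', rfl⟩ x y hxy
  exact congrArg f' (Quotient.sound hxy)

lemma classFunctions_inf_classFunctions (P Q : Setoid α) :
    P.classFunctions ⊓ Q.classFunctions = (P ⊔ Q).classFunctions := by
  ext f
  simp only [Submodule.mem_inf, mem_classFunctions, sup_le_iff]

variable [Fintype α]

lemma finrank_classFunctions (S : Setoid α) :
    Module.finrank ℚ S.classFunctions = #S.classesFinset := by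
  rw [classFunctions, LinearMap.finrank_range_of_inj
    (LinearMap.funLeft_injective_of_surjective _ _ _ Quotient.mk_surjective),
    Module.finrank_pi, Fintype.card_eq_nat_card, Nat.card_congr S.quotientEquivClasses,
    Nat.card_coe_set_eq, Set.ncard_eq_toFinset_card _ (Set.toFinite _)]
  rfl

lemma card_classesFinset_add_card_classesFinset_le (P Q : Setoid α) :
    #P.classesFinset + #Q.classesFinset ≤ Fintype.card α + #(P ⊔ Q).classesFinset := by
  have hsum := Submodule.finrank_sup_add_finrank_inf_eq P.classFunctions Q.classFunctions
  have hle := Submodule.finrank_le (P.classFunctions ⊔ Q.classFunctions)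
  rw [classFunctions_inf_classFunctions, finrank_classFunctions, finrank_classFunctions,
    finrank_classFunctions] at hsum
  rw [Module.finrank_fintype_fun_eq_card] at hle
  omega

lemma card_classesFinset_top_le_one : #(⊤ : Setoid α).classesFinset ≤ 1 := by
  refine Finset.card_le_one.2 fun A hA B hB => ?_
  obtain ⟨x, rfl⟩ := mem_classesFinset.1 hA
  obtain ⟨y, rfl⟩ := mem_classesFinset.1 hB
  ext z
  exact ⟨fun _ => trivial, fun _ => trivial⟩

end BlockCount

section Complements

variable [Fintype α]

lemma card_le_profile_of_inf_eq_bot {P Q : Setoid α} (h : P ⊓ Q = ⊥) {I : Finset α} {m : ℕ}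
    (hI : #I ≤ m) : #{y | ∃ x ∈ I, P y x} ≤ Q.profile m := by
  refine card_le_profile fun B hB => le_trans ?_ hI
  refine card_le_card_of_forall_subsingleton (fun y x => P y x) (fun y hy => ?_) fun x _ => ?_
  · simpa using (mem_filter.1 hy).1
  · rintro y ⟨hy, hyx⟩ y' ⟨hy', hy'x⟩
    obtain ⟨z, rfl⟩ := mem_classesFinset.1 hB
    have hQ : Q y y' := Q.trans (mem_filter.1 hy).2 (Q.symm (mem_filter.1 hy').2)
    have : (P ⊓ Q) y y' := inf_iff_and.2 ⟨P.trans hyx (P.symm hy'x), hQ⟩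
    rwa [h] at this

variable [LinearOrder α]

section Ranks

variable (P : Setoid α)

noncomputable def rankInClass (x : α) : ℕ := #{y | P y x ∧ y < x}

noncomputable def classMin (x : α) : α :=
  ({y | P y x} : Finset α).min' ⟨x, by simp⟩

variable {P} {x y : α}

lemma rankInClass_eq_card_filter_lt (h : P x y) :
    P.rankInClass x = #{z ∈ ({z | P z y} : Finset α) | z < x} := by
  rw [rankInClass, filter_filter]
  exact congrArg card (filter_congr fun z _ => and_congr_left' (rel_iff_rel_of_rel h z))

lemma rankInClass_lt_rankInClass (h : P x y) (hlt : x < y) : P.rankInClass x < P.rankInClass y := by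
  rw [rankInClass_eq_card_filter_lt h, rankInClass_eq_card_filter_lt (P.refl y)]
  exact card_filter_lt_lt_card_filter_lt (f := id) (by simpa using h) hlt

lemma eq_of_rankInClass_eq (h : P x y) (hr : P.rankInClass x = P.rankInClass y) : x = y := by
  rcases lt_trichotomy x y with hlt | rfl | hlt
  · exact absurd hr (rankInClass_lt_rankInClass h hlt).ne
  · rfl
  · exact absurd hr (rankInClass_lt_rankInClass (P.symm h) hlt).ne'

lemma image_rankInClass (x : α) :
    ({y | P y x} : Finset α).image P.rankInClass = range (P.classSize x) := by
  rw [classSize, ← image_card_filter_lt (f := id) (Set.injOn_id _)]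
  refine image_congr fun y hy => ?_
  exact rankInClass_eq_card_filter_lt (by simpa using hy)

lemma rankInClass_lt_classSize (x : α) : P.rankInClass x < P.classSize x := by
  rw [← mem_range, ← image_rankInClass]
  exact mem_image_of_mem _ (by simp)

lemma exists_rel_rankInClass_eq {j : ℕ} (hj : j < P.classSize x) :
    ∃ y, P y x ∧ P.rankInClass y = j := by
  rw [← mem_range, ← image_rankInClass] at hj
  simpa using hj

lemma classMin_rel (x : α) : P (P.classMin x) x :=
  (mem_filter.1 (min'_mem ({y | P y x} : Finset α) _)).2

lemma classMin_eq_of_rel (h : P x y) : P.classMin x = P.classMin y := by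
  unfold classMin
  congr 1
  exact filter_rel_eq_of_rel h

lemma rankInClass_classMin (x : α) : P.rankInClass (P.classMin x) = 0 := by
  rw [rankInClass, card_eq_zero, filter_eq_empty_iff]
  rintro z - ⟨hz, hlt⟩
  exact (min'_le _ z (by simpa using P.trans hz (classMin_rel x))).not_gt hlt

lemma classMin_eq_self (hx : P.rankInClass x = 0) : P.classMin x = x :=
  eq_of_rankInClass_eq (classMin_rel x) (by rw [rankInClass_classMin, hx])

lemma card_rankInClass_eq_and {φ : α → Prop} [DecidablePred φ]
    (hφ : ∀ x y, P x y → φ x → φ y) (j : ℕ) :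
    #{y | P.rankInClass y = j ∧ φ y} = #{x | P.rankInClass x = 0 ∧ j < P.classSize x ∧ φ x} := by
  refine card_bij (fun y _ => P.classMin y) (fun y hy => ?_) (fun y hy y' hy' h => ?_)
    fun x hx => ?_
  · simp only [mem_filter, mem_univ, true_and] at hy ⊢
    refine ⟨rankInClass_classMin y, ?_, hφ _ _ (P.symm (classMin_rel y)) hy.2⟩
    rw [classSize_eq_of_rel (classMin_rel y), ← hy.1]
    exact rankInClass_lt_classSize y
  · simp only [mem_filter, mem_univ, true_and] at hy hy'
    refine eq_of_rankInClass_eq ?_ (hy.1.trans hy'.1.symm)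
    exact P.trans (P.symm (classMin_rel y)) (h ▸ classMin_rel y')
  · simp only [mem_filter, mem_univ, true_and] at hx ⊢
    obtain ⟨y, hyx, rfl⟩ := exists_rel_rankInClass_eq hx.2.1
    exact ⟨y, ⟨rfl, hφ _ _ (P.symm hyx) hx.2.2⟩,
      (classMin_eq_of_rel hyx).trans (classMin_eq_self hx.1)⟩

lemma card_rankInClass_eq (j : ℕ) :
    #{y | P.rankInClass y = j} = #{x | P.rankInClass x = 0 ∧ j < P.classSize x} := by
  simpa using card_rankInClass_eq_and (P := P) (φ := fun _ => True) (fun _ _ _ h => h) j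

lemma card_rankInClass_eq_and_exists_mem_rel {I : Finset α} (hI : ∀ x ∈ I, P.rankInClass x = 0)
    (j : ℕ) : #{y | P.rankInClass y = j ∧ ∃ w ∈ I, P y w} = #{x ∈ I | j < P.classSize x} := by
  rw [card_rankInClass_eq_and (fun x y hxy ⟨w, hw, hxw⟩ => ⟨w, hw, P.trans (P.symm hxy) hxw⟩)]
  refine congrArg card (Finset.ext fun x => ?_)
  simp only [mem_filter, mem_univ, true_and]
  refine ⟨fun ⟨hx, hj, w, hw, hxw⟩ => ?_, fun ⟨hx, hj⟩ => ⟨hI x hx, hj, x, hx, P.refl x⟩⟩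
  exact ⟨eq_of_rankInClass_eq hxw (hx.trans (hI w hw).symm) ▸ hw, hj⟩

lemma card_classesFinset_eq_card_rankInClass_eq_zero :
    #P.classesFinset = #{x | P.rankInClass x = 0} := by
  symm
  refine card_bij (fun x _ => {y | P y x}) (fun x _ => P.class_mem_classesFinset x)
    (fun x hx x' hx' h => ?_) fun B hB => ?_
  · simp only [mem_filter, mem_univ, true_and] at hx hx'
    exact eq_of_rankInClass_eq (setOf_rel_eq_setOf_rel_iff.1 h) (hx.trans hx'.symm)
  · obtain ⟨z, rfl⟩ := mem_classesFinset.1 hB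
    refine ⟨P.classMin z, by simp [rankInClass_classMin], ?_⟩
    ext y
    exact rel_iff_rel_of_rel (classMin_rel z) y

end Ranks

lemma card_lt_rel_eq_sum_choose (S : Setoid α) :
    #{p : α × α | p.1 < p.2 ∧ S p.1 p.2} = ∑ B ∈ S.classesFinset, B.ncard.choose 2 := by
  rw [card_eq_sum_card_fiberwise (f := fun p => {y | S y p.2})
    fun p _ => S.class_mem_classesFinset p.2]
  refine sum_congr rfl fun B hB => ?_
  obtain ⟨z, rfl⟩ := mem_classesFinset.1 hB
  rw [Set.ncard_eq_toFinset_card', ← card_product_filter_lt]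
  refine congrArg card (Finset.ext fun p => ?_)
  simp only [mem_filter, mem_univ, true_and, mem_product, Set.mem_toFinset, Set.mem_ofPred_eq,
    setOf_rel_eq_setOf_rel_iff]
  exact ⟨fun ⟨⟨hlt, hrel⟩, hz⟩ => ⟨⟨S.trans hrel hz, hz⟩, hlt⟩,
    fun ⟨⟨h1, h2⟩, hlt⟩ => ⟨⟨hlt, S.trans h1 (S.symm h2)⟩, h2⟩⟩

section Layered

variable (P : Setoid α)

noncomputable def layeredCompl : Setoid α := ker P.rankInClass

@[simp]
lemma layeredCompl_rel {x y : α} : P.layeredCompl x y ↔ P.rankInClass x = P.rankInClass y :=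
  Iff.rfl

lemma inf_layeredCompl : P ⊓ P.layeredCompl = ⊥ :=
  eq_bot_iff.2 fun _ _ h => eq_of_rankInClass_eq (inf_iff_and.1 h).1 (inf_iff_and.1 h).2

lemma sup_layeredCompl : P ⊔ P.layeredCompl = ⊤ := by
  refine eq_top_iff.2 fun x y => ?_
  set S := P ⊔ P.layeredCompl
  have hP : P ≤ S := le_sup_left
  have hL : P.layeredCompl ≤ S := le_sup_right
  have hmin : P.layeredCompl (P.classMin x) (P.classMin y) :=
    (rankInClass_classMin x).trans (rankInClass_classMin y).symm
  exact S.trans (hP (P.symm (classMin_rel x))) (S.trans (hL hmin) (hP (classMin_rel y)))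

variable {P}

lemma profile_layeredCompl_le {Q : Setoid α} (h : P ⊓ Q = ⊥) (m : ℕ) :
    P.layeredCompl.profile m ≤ Q.profile m := by
  -- `I` holds the minima of `m` largest classes of `P`
  obtain ⟨I, hI, hIm, hItop⟩ :=
    exists_subset_forall_min_card_filter_le {x | P.rankInClass x = 0} P.classSize m
  refine le_trans (profile_le_card fun B hB => ?_) (card_le_profile_of_inf_eq_bot h hIm)
  obtain ⟨z, rfl⟩ := mem_classesFinset.1 hB
  have hlayer : ({y | P.layeredCompl y z} : Set α).ncard =
      #{y | P.rankInClass y = P.rankInClass z} := by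
    rw [Set.ncard_eq_card_filter_mem]
    simp
  have hmeet : #{y ∈ ({y | ∃ x ∈ I, P y x} : Finset α) | y ∈ {y | P.layeredCompl y z}} =
      #{y | P.rankInClass y = P.rankInClass z ∧ ∃ w ∈ I, P y w} := by
    rw [filter_filter]
    exact congrArg card (filter_congr fun _ _ => by simp [and_comm])
  rw [hlayer, hmeet, card_rankInClass_eq, card_rankInClass_eq_and_exists_mem_rel
    fun x hx => (mem_filter.1 (hI hx)).2, ← filter_filter]
  exact hItop _

end Layered

section Balanced

variable (P : Setoid α)

noncomputable def classKey (x : α) : ℕ ×ₗ α := toLex (P.classSize x, P.classMin x)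

noncomputable def columnKey (x : α) : ℕ ×ₗ (ℕ ×ₗ α) := toLex (P.rankInClass x, P.classKey x)

noncomputable def columnPos (x : α) : ℕ := #{z | P.columnKey z < P.columnKey x}

/-- The elements are dealt, in the order of `columnKey`, into `n + 1 - #P` blocks: first the
minima of all classes, then their second elements, and so on, each column sorted by class size. -/
noncomputable def balancedCompl : Setoid α :=
  ker fun x => P.columnPos x % (Fintype.card α + 1 - #P.classesFinset)

variable {P} {x y : α}

lemma classKey_eq_of_rel (h : P x y) : P.classKey x = P.classKey y := by
  rw [classKey, classKey, classSize_eq_of_rel h, classMin_eq_of_rel h]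

lemma columnKey_injective : Function.Injective P.columnKey := by
  intro x y h
  simp only [columnKey, classKey, toLex_inj, Prod.mk.injEq] at h
  obtain ⟨hr, -, hmin⟩ := h
  exact eq_of_rankInClass_eq (P.trans (P.symm (classMin_rel x)) (hmin ▸ classMin_rel y)) hr

lemma columnPos_injective : Function.Injective P.columnPos := by
  intro x y h
  rcases lt_trichotomy (P.columnKey x) (P.columnKey y) with hlt | heq | hlt
  · exact absurd h (card_filter_lt_lt_card_filter_lt (mem_univ x) hlt).ne
  · exact columnKey_injective heq
  · exact absurd h (card_filter_lt_lt_card_filter_lt (mem_univ y) hlt).ne'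

lemma columnPos_lt_card (x : α) : P.columnPos x < Fintype.card α :=
  card_filter_lt_lt_card (mem_univ x)

lemma image_columnPos : univ.image P.columnPos = range (Fintype.card α) :=
  image_card_filter_lt columnKey_injective.injOn

lemma columnPos_classMin_le (x : α) : P.columnPos (P.classMin x) ≤ P.columnPos x := by
  refine card_le_card fun z hz => mem_filter.2 ⟨mem_univ z, (mem_filter.1 hz).2.trans_le ?_⟩
  rw [columnKey, columnKey, rankInClass_classMin, classKey_eq_of_rel (classMin_rel x),
    Prod.Lex.toLex_le_toLex]
  rcases Nat.eq_zero_or_pos (P.rankInClass x) with h | h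
  · exact Or.inr ⟨h.symm, le_rfl⟩
  · exact Or.inl h

lemma columnPos_lt_of_rankInClass_eq_zero (hx : P.rankInClass x = 0) :
    P.columnPos x < #{z | P.rankInClass z = 0} := by
  refine card_lt_card ((ssubset_iff_of_subset fun z hz => ?_).2 ⟨x, by simpa using hx, by simp⟩)
  simp only [mem_filter, mem_univ, true_and, columnKey, Prod.Lex.toLex_lt_toLex, hx] at hz ⊢
  omega

lemma columnPos_add_le (y : α) :
    P.columnPos y + #{z | P.rankInClass z = 0} ≤ Fintype.card α + P.columnPos (P.classMin y) := by
  set j := P.rankInClass y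
  set c := P.classKey y
  have hpos : P.columnPos y =
      #{z | P.rankInClass z < j} + #{z | P.rankInClass z = j ∧ P.classKey z < c} := by
    rw [← card_union_of_disjoint (disjoint_filter.2 fun z _ h1 h2 => h1.ne h2.1), ← filter_or]
    exact congrArg card (filter_congr fun z _ => Prod.Lex.toLex_lt_toLex)
  have hposMin : P.columnPos (P.classMin y) = #{z | P.rankInClass z = 0 ∧ P.classKey z < c} := by
    refine congrArg card (filter_congr fun z _ => ?_)
    rw [columnKey, columnKey, rankInClass_classMin, classKey_eq_of_rel (classMin_rel y),
      Prod.Lex.toLex_lt_toLex]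
    simp [c]
  have hsplit : ∀ i, #{z | P.rankInClass z = i ∧ P.classKey z < c} +
      #{z | P.rankInClass z = i ∧ ¬ P.classKey z < c} = #{z | P.rankInClass z = i} := by
    intro i
    rw [← filter_filter, ← filter_filter, card_filter_add_card_filter_not]
  have hbig : ∀ i ≤ j, #{z | P.rankInClass z = i ∧ ¬ P.classKey z < c} =
      #{z | P.rankInClass z = 0 ∧ ¬ P.classKey z < c} := by
    -- a class with key at least `c` is at least as large as the class of `y`
    intro i hi
    have := card_rankInClass_eq_and (P := P) (φ := fun z => ¬ P.classKey z < c)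
      (fun x y hxy => by simp [classKey_eq_of_rel hxy]) i
    rw [this]
    refine congrArg card (filter_congr fun z _ => ⟨fun h => ⟨h.1, h.2.2⟩, fun h => ⟨h.1, ?_, h.2⟩⟩)
    have hsize : P.classSize y ≤ P.classSize z := Prod.Lex.monotone_fst _ _ (not_lt.1 h.2)
    have := rankInClass_lt_classSize (P := P) y
    omega
  have hle : #{z | P.rankInClass z < j} + #{z | P.rankInClass z = j} ≤ Fintype.card α := by
    rw [← card_union_of_disjoint (disjoint_filter.2 fun z _ h1 h2 => h1.ne h2)]
    exact card_le_univ _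
  have := hsplit j
  have := hsplit 0
  have := hbig j le_rfl
  have := hbig 0 (Nat.zero_le _)
  omega

@[simp]
lemma balancedCompl_rel : P.balancedCompl x y ↔
    P.columnPos x % (Fintype.card α + 1 - #P.classesFinset) =
      P.columnPos y % (Fintype.card α + 1 - #P.classesFinset) :=
  Iff.rfl

lemma card_columnPos_lt (b : ℕ) : #{x | P.columnPos x < b} = min b (Fintype.card α) := by
  rw [← card_range (min b _), ← card_image_of_injective _ columnPos_injective]
  refine congrArg card (Finset.ext fun p => ?_)
  simp only [mem_image, mem_filter, mem_univ, true_and, mem_range, lt_min_iff]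
  constructor
  · rintro ⟨x, hx, rfl⟩
    exact ⟨hx, columnPos_lt_card x⟩
  · rintro ⟨hpb, hpN⟩
    obtain ⟨x, -, rfl⟩ := mem_image.1 (image_columnPos (P := P) ▸ mem_range.2 hpN)
    exact ⟨x, hpb, rfl⟩

lemma card_columnPos_lt_mul_and_mod_eq_le {r : ℕ} (hr : 0 < r) (m v : ℕ) :
    #{x | P.columnPos x < r * m ∧ P.columnPos x % r = v} ≤ m := by
  refine (card_le_card_of_injOn (fun x => P.columnPos x / r) (fun x hx => ?_)
    fun x hx x' hx' hdiv => ?_).trans (card_range m).le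
  · exact mem_range.2 ((Nat.div_lt_iff_lt_mul hr).2 (mul_comm r m ▸ (mem_filter.1 hx).2.1))
  · simp only [coe_filter, mem_univ, true_and, Set.mem_ofPred_eq] at hx hx'
    refine columnPos_injective (P := P) ?_
    rw [← Nat.div_add_mod (P.columnPos x) r, ← Nat.div_add_mod (P.columnPos x') r, hx.2, hx'.2]
    exact congrArg (r * · + v) hdiv

lemma columnPos_add_le_of_rel (h : P x y) :
    P.columnPos x + #P.classesFinset ≤ Fintype.card α + P.columnPos y := by
  rw [card_classesFinset_eq_card_rankInClass_eq_zero]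
  exact (columnPos_add_le x).trans (by
    rw [classMin_eq_of_rel h]; exact Nat.add_le_add_left (columnPos_classMin_le y) _)

variable (P)

lemma inf_balancedCompl : P ⊓ P.balancedCompl = ⊥ := by
  refine eq_bot_iff.2 fun x y h => columnPos_injective (P := P)
    (Nat.ModEq.eq_of_abs_lt (m := Fintype.card α + 1 - #P.classesFinset) ?_ ?_)
  · exact (balancedCompl_rel.1 (inf_iff_and.1 h).2 :)
  · have h1 := columnPos_add_le_of_rel (inf_iff_and.1 h).1
    have h2 := columnPos_add_le_of_rel (P.symm (inf_iff_and.1 h).1)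
    have := P.card_classesFinset_le
    rw [abs_sub_lt_iff]
    omega

lemma sup_balancedCompl [Nonempty α] : P ⊔ P.balancedCompl = ⊤ := by
  set S := P ⊔ P.balancedCompl
  have hP : P ≤ S := le_sup_left
  have hB : P.balancedCompl ≤ S := le_sup_right
  set k := #P.classesFinset
  set N := Fintype.card α
  have hk : k = #{z | P.rankInClass z = 0} := card_classesFinset_eq_card_rankInClass_eq_zero
  have hkN : k ≤ N := P.card_classesFinset_le
  obtain ⟨z₀, hz₀, hmax⟩ := exists_max_image {z | P.rankInClass z = 0} P.columnPos
    ⟨P.classMin (Classical.arbitrary α), by simp [rankInClass_classMin]⟩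
  simp only [mem_filter, mem_univ, true_and] at hz₀ hmax
  have hz₀k : P.columnPos z₀ < k := hk ▸ columnPos_lt_of_rankInClass_eq_zero hz₀
  have hmin : ∀ d z, P.rankInClass z = 0 → P.columnPos z₀ - P.columnPos z = d → S z z₀ := by
    intro d
    induction d using Nat.strong_induction_on with
    | _ d ih =>
      intro z hz hd
      rcases (hmax z hz).eq_or_lt with heq | hlt
      · exact columnPos_injective heq ▸ S.refl z
      -- the element `r` positions after `z` lies in a class whose minimum comes after `z`
      obtain ⟨y, -, hy⟩ := mem_image.1 (image_columnPos (P := P) ▸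
        mem_range.2 (show P.columnPos z + (N + 1 - k) < N by omega))
      have hzy : S z y := hB (by rw [balancedCompl_rel, hy]; exact (Nat.add_mod_right _ _).symm)
      have := columnPos_add_le (P := P) y
      exact S.trans hzy (S.trans (hP (P.symm (classMin_rel y)))
        (ih _ (by omega) _ (rankInClass_classMin y) rfl))
  have hall : ∀ x, S x z₀ := fun x =>
    S.trans (hP (P.symm (classMin_rel x))) (hmin _ _ (rankInClass_classMin x) rfl)
  exact eq_top_iff.2 fun x y => S.trans (hall x) (S.symm (hall y))

variable {P}

lemma profile_le_profile_balancedCompl {Q : Setoid α} (h : P ⊔ Q = ⊤) (m : ℕ) :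
    Q.profile m ≤ P.balancedCompl.profile m := by
  set r := Fintype.card α + 1 - #P.classesFinset
  have hr : 0 < r := by have := P.card_classesFinset_le; omega
  have hQ : #Q.classesFinset ≤ r := by
    have := card_classesFinset_add_card_classesFinset_le P Q
    rw [h] at this
    have := card_classesFinset_top_le_one (α := α)
    omega
  calc Q.profile m ≤ min (r * m) (Fintype.card α) :=
        le_min ((Q.profile_le_card_mul m).trans (Nat.mul_le_mul_right m hQ))
          (Q.profile_le_card_univ m)
    _ = #{x | P.columnPos x < r * m} := (card_columnPos_lt _).symm
    _ ≤ P.balancedCompl.profile m := card_le_profile fun B hB => ?_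
  obtain ⟨z, rfl⟩ := mem_classesFinset.1 hB
  rw [filter_filter]
  convert card_columnPos_lt_mul_and_mod_eq_le (P := P) hr m (P.columnPos z % r) using 4
  simp [r]

end Balanced

variable {P Q : Setoid α} {g : ℕ → ℝ}

lemma isCompl_layeredCompl (P : Setoid α) : IsCompl P P.layeredCompl :=
  .of_eq P.inf_layeredCompl P.sup_layeredCompl

lemma isCompl_balancedCompl [Nonempty α] (P : Setoid α) : IsCompl P P.balancedCompl :=
  .of_eq P.inf_balancedCompl P.sup_balancedCompl

theorem isMinOn_classSum_iff_profile_eq_balancedCompl [Nonempty α] (hg0 : g 0 = 0)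
    (hg : StrictMono fun i => g (i + 1) - g i) (hQ : IsCompl P Q) :
    IsMinOn (classSum · g) {Q' | IsCompl P Q'} Q ↔ Q.profile = P.balancedCompl.profile :=
  isMinOn_classSum_iff hg0 hg hQ P.isCompl_balancedCompl
    fun _ hQ' => profile_le_profile_balancedCompl hQ'.sup_eq_top

theorem isMaxOn_classSum_iff_profile_eq_layeredCompl (hg0 : g 0 = 0)
    (hg : StrictMono fun i => g (i + 1) - g i) (hQ : IsCompl P Q) :
    IsMaxOn (classSum · g) {Q' | IsCompl P Q'} Q ↔ Q.profile = P.layeredCompl.profile :=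
  isMaxOn_classSum_iff hg0 hg hQ P.isCompl_layeredCompl
    fun _ hQ' => profile_layeredCompl_le hQ'.inf_eq_bot

end Complements

end Setoid

section HammingAndVariation

open Setoid

variable {n : ℕ} {P Q₁ Q₂ : Setoid (Fin n)}

lemma partSize_eq_sum_choose (S : Setoid (Fin n)) :
    partSize n S = ∑ B ∈ S.classesFinset, B.ncard.choose 2 := by
  rw [partSize, ← S.card_lt_rel_eq_sum_choose, ← Set.ncard_coe_finset]
  congr
  ext
  simp

lemma partSize_bot : partSize n ⊥ = 0 :=
  (Set.ncard_eq_zero).2 (Set.eq_empty_iff_forall_notMem.2 fun _ hp => hp.1.ne hp.2)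

lemma HD_le_HD_iff (h₁ : P ⊓ Q₁ = ⊥) (h₂ : P ⊓ Q₂ = ⊥) :
    HD n P Q₁ ≤ HD n P Q₂ ↔
      Q₁.classSum (fun a => (a.choose 2 : ℝ)) ≤ Q₂.classSum (fun a => (a.choose 2 : ℝ)) := by
  have hsize : ∀ S : Setoid (Fin n), (partSize n S : ℝ) = S.classSum fun a => (a.choose 2 : ℝ) :=
    fun S => by rw [partSize_eq_sum_choose, classSum, Nat.cast_sum]
  rw [HD, HD, h₁, h₂, partSize_bot, ← hsize, ← hsize, Nat.cast_le]
  simp only [Nat.cast_zero, mul_zero, sub_zero, add_le_add_iff_left, Nat.cast_le]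

lemma entropy_eq (hn : n ≠ 0) (S : Setoid (Fin n)) :
    entropy n S = Real.logb 2 n - S.classSum (fun a => a * Real.log a) / (n * Real.log 2) := by
  have hsum : ∑ B ∈ S.classesFinset, (B.ncard : ℝ) = n := by
    rw [← Nat.cast_sum, S.sum_ncard_classesFinset, Fintype.card_fin]
  have hterm : ∀ B ∈ S.classesFinset, (B.ncard : ℝ) / n * Real.logb 2 ((B.ncard : ℝ) / n) =
      B.ncard * Real.log B.ncard / (n * Real.log 2) - B.ncard / n * Real.logb 2 n := by
    intro B hB
    have hB0 : (B.ncard : ℝ) ≠ 0 := Nat.cast_ne_zero.2 (ncard_pos_of_mem_classesFinset hB).ne'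
    rw [Real.logb_div hB0 (Nat.cast_ne_zero.2 hn), Real.logb]
    ring
  rw [entropy, ← (Set.toFinite S.classes).coe_toFinset, finsum_mem_coe_finset,
    ← classesFinset, sum_congr rfl hterm, sum_sub_distrib, ← sum_div, ← sum_mul, ← sum_div, hsum,
    div_self (Nat.cast_ne_zero.2 hn), classSum]
  ring

lemma entropy_bot (hn : n ≠ 0) : entropy n ⊥ = Real.logb 2 n := by
  rw [entropy_eq hn, classSum, sum_eq_zero fun B hB => ?_, zero_div, sub_zero]
  obtain ⟨x, rfl⟩ := mem_classesFinset.1 hB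
  simp

lemma VI_le_VI_iff (hn : n ≠ 0) (h₁ : P ⊓ Q₁ = ⊥) (h₂ : P ⊓ Q₂ = ⊥) :
    VI n P Q₁ ≤ VI n P Q₂ ↔
      Q₁.classSum (fun a => a * Real.log a) ≤ Q₂.classSum (fun a => a * Real.log a) := by
  have hpos : (0 : ℝ) < n * Real.log 2 :=
    mul_pos (Nat.cast_pos.2 (Nat.pos_of_ne_zero hn)) (Real.log_pos one_lt_two)
  have hVI : ∀ Q : Setoid (Fin n), P ⊓ Q = ⊥ → VI n P Q =
      Real.logb 2 n - entropy n P + Q.classSum (fun a => a * Real.log a) / (n * Real.log 2) :=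
    fun Q h => by rw [VI, h, entropy_bot hn, entropy_eq hn Q]; ring
  rw [hVI Q₁ h₁, hVI Q₂ h₂, add_le_add_iff_left, div_le_div_iff_of_pos_right hpos]

end HammingAndVariation

/-- Among the complements of `P`, the Hamming distance `HD(P,·)` and the
variation of information `VI(P,·)` have the same minimizers and maximizers. -/
theorem HD_VI_same_extremizers_over_complements (n : ℕ) (hn : 1 ≤ n)
    (P Q : Setoid (Fin n)) (hmeet : P ⊓ Q = ⊥) (hjoin : P ⊔ Q = ⊤) :
    ((∀ Q' : Setoid (Fin n), P ⊓ Q' = ⊥ → P ⊔ Q' = ⊤ → HD n P Q ≤ HD n P Q') ↔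
      (∀ Q' : Setoid (Fin n), P ⊓ Q' = ⊥ → P ⊔ Q' = ⊤ → VI n P Q ≤ VI n P Q')) ∧
    ((∀ Q' : Setoid (Fin n), P ⊓ Q' = ⊥ → P ⊔ Q' = ⊤ → HD n P Q' ≤ HD n P Q) ↔
      (∀ Q' : Setoid (Fin n), P ⊓ Q' = ⊥ → P ⊔ Q' = ⊤ → VI n P Q' ≤ VI n P Q)) := by
  have : Nonempty (Fin n) := ⟨⟨0, hn⟩⟩
  have hPQ : IsCompl P Q := .of_eq hmeet hjoin
  obtain ⟨hHDmin, hHDmax⟩ := forall_isCompl_le_iff_isMinOn_and_isMaxOn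
    (fun _ _ h₁ h₂ => HD_le_HD_iff h₁.inf_eq_bot h₂.inf_eq_bot) hPQ
  obtain ⟨hVImin, hVImax⟩ := forall_isCompl_le_iff_isMinOn_and_isMaxOn
    (fun _ _ h₁ h₂ => VI_le_VI_iff (by omega) h₁.inf_eq_bot h₂.inf_eq_bot) hPQ
  have hHD := strictMono_choose_two_sub
  have hVI := strictMono_sub_of_strictConvexOn Real.strictConvexOn_mul_log
  rw [hHDmin, hHDmax, hVImin, hVImax,
    Setoid.isMinOn_classSum_iff_profile_eq_balancedCompl (by simp) hHD hPQ,
    Setoid.isMinOn_classSum_iff_profile_eq_balancedCompl (by simp) hVI hPQ,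
    Setoid.isMaxOn_classSum_iff_profile_eq_layeredCompl (by simp) hHD hPQ,
    Setoid.isMaxOn_classSum_iff_profile_eq_layeredCompl (by simp) hVI hPQ]
  exact ⟨Iff.rfl, Iff.rfl⟩
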